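/- In the min-cost popular instance construction from a monotone 1-in-3 SAT instance with m clauses, any multiset B of items such that the resulting instance (A ∪ B, E) admits a popular matching matching all people has total cost at least 14m. -/

import Mathlib

/-- Person `a` prefers matching `M` to `M'`. -/
def Prefers {α β : Type*} (rank : α → β → ℕ∞) (M M' : α → Option β) (a : α) : Prop :=
  (∃ b, M a = some b ∧ M' a = none) ∨
  (∃ b b', M a = some b ∧ M' a = some b' ∧ rank a b < rank a b')

/-- `M'` is more popular than `M`. -/
def MorePopular {α β : Type*} [Fintype α] (rank : α → β → ℕ∞) (M' M : α → Option β) : Prop :=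
  Nat.card {a // Prefers rank M M' a} < Nat.card {a // Prefers rank M' M a}

/-- `(a,b)` is an edge of the instance: `b` is on `a`'s preference list. -/
def Edge {α β : Type*} (rank : α → β → ℕ∞) (a : α) (b : β) : Prop := rank a b ≠ ⊤

/-- Number of people matched to item `b`. -/
noncomputable def usage {α β : Type*} [Fintype α] (M : α → Option β) (b : β) : ℕ :=
  Nat.card {a // M a = some b}

/-- A matching of the instance in which each item `b` may be matched to up to
`copies b` people (`copies b = 0` means `b` is not available). -/
def IsCapMatching {α β : Type*} [Fintype α] (rank : α → β → ℕ∞) (copies : β → ℕ)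
    (M : α → Option β) : Prop :=
  (∀ a b, M a = some b → Edge rank a b) ∧ ∀ b, usage M b ≤ copies b

/-- A popular matching of the capacitated instance. -/
def PopularCap {α β : Type*} [Fintype α] (rank : α → β → ℕ∞) (copies : β → ℕ)
    (M : α → Option β) : Prop :=
  IsCapMatching rank copies M ∧
  ∀ M', IsCapMatching rank copies M' → ¬ MorePopular rank M' M

/-- A 1-in-3 satisfying assignment: exactly one literal of every clause is true. -/
def ExactlyOneTrue {n : ℕ} {m : ℕ} (cl : Fin m → Fin 3 → Fin n) (τ : Fin n → Bool) : Prop :=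
  ∀ i, ∃! k : Fin 3, τ (cl i k) = true

/-- Items of the min-cost popular instance construction: `Sum.inl j` is the public item
`u_j`; `Sum.inr (i, t)` with `t = 0,1,2` are the internal items `p₁,p₂,p₃` of clause `i`
and `t = 3` is the internal item `q` of clause `i`. -/
abbrev InstItems (m n : ℕ) := Fin n ⊕ (Fin m × Fin 4)

/-- Preference lists of the 9 people of each clause gadget (Fig. 1):
for clause `Cᵢ = (X_{j₁} ∨ X_{j₂} ∨ X_{j₃})`, person `a₁..a₃` have lists
`(u_{j₁},u_{j₂})`, `(u_{j₂},u_{j₃})`, `(u_{j₁},u_{j₃})`; `a₄..a₆` have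
`(u_{j₁},p₁)`, `(u_{j₂},p₂)`, `(u_{j₃},p₃)`; `a₇..a₉` have `(p₁,q)`, `(p₂,q)`, `(p₃,q)`. -/
def instRank {m n : ℕ} (cl : Fin m → Fin 3 → Fin n) :
    Fin m × Fin 9 → InstItems m n → ℕ∞ := fun a b =>
  let i := a.1
  let k : ℕ := (a.2 : ℕ)
  match b with
  | Sum.inl u =>
      if k = 0 then (if u = cl i 0 then 1 else if u = cl i 1 then 2 else ⊤)
      else if k = 1 then (if u = cl i 1 then 1 else if u = cl i 2 then 2 else ⊤)
      else if k = 2 then (if u = cl i 0 then 1 else if u = cl i 2 then 2 else ⊤)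
      else if k = 3 then (if u = cl i 0 then 1 else ⊤)
      else if k = 4 then (if u = cl i 1 then 1 else ⊤)
      else if k = 5 then (if u = cl i 2 then 1 else ⊤)
      else ⊤
  | Sum.inr jt =>
      if jt.1 = i then
        (if k = 3 ∧ (jt.2 : ℕ) = 0 then 2
         else if k = 4 ∧ (jt.2 : ℕ) = 1 then 2
         else if k = 5 ∧ (jt.2 : ℕ) = 2 then 2
         else if k = 6 ∧ (jt.2 : ℕ) = 0 then 1
         else if k = 7 ∧ (jt.2 : ℕ) = 1 then 1
         else if k = 8 ∧ (jt.2 : ℕ) = 2 then 1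
         else if k = 6 ∧ (jt.2 : ℕ) = 3 then 2
         else if k = 7 ∧ (jt.2 : ℕ) = 3 then 2
         else if k = 8 ∧ (jt.2 : ℕ) = 3 then 2
         else ⊤)
      else ⊤

/-- Costs: each public item `u_j` costs 3, each internal item `p_t` costs 1, and each
internal item `q` costs 0. -/
def instCost {m n : ℕ} : InstItems m n → ℕ := fun b =>
  match b with
  | Sum.inl _ => 3
  | Sum.inr jt => if (jt.2 : ℕ) = 3 then 0 else 1

/-- Total cost of buying the chosen numbers of copies of the items. -/
def instTotalCost {m n : ℕ} (copies : InstItems m n → ℕ) : ℕ :=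
  ∑ b : InstItems m n, copies b * instCost b

/-!
Fix a clause gadget and write `t = 1, 2, 3`. The persons `a₁, a₂, a₃` only have public items on
their lists and cost `9`; `a_{3+t}` costs `1` (on `p_t`) or `3` (on `u_{j_t}`), and `a_{6+t}`
costs `1` (on `p_t`) or `0` (on `q`). If `a_{3+t}` is on `p_t` and `a_{6+t}` on `q` while some
person `x` holds `u_{j_t}`, then moving `a_{6+t}` to `p_t` and `a_{3+t}` to `u_{j_t}` and
unmatching `x` makes two persons better off and one worse off, against popularity. The pair
persons hold at least two of the three public items of the clause, so either some `a_{3+t}`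
pays `3` or at least two of `a₇, a₈, a₉` pay `1`; in both cases the gadget costs at least `14`.
-/

open Finset Function

section Popularity

variable {α β : Type*} {rank : α → β → ℕ∞}

lemma Prefers.not_prefers {M M' : α → Option β} {a : α} (h : Prefers rank M M' a) :
    ¬ Prefers rank M' M a := by
  rintro (⟨b, h₁, h₂⟩ | ⟨b, b', h₁, h₂, h₃⟩) <;>
    rcases h with ⟨c, h₁', h₂'⟩ | ⟨c, c', h₁', h₂', h₃'⟩ <;> simp_all [lt_asymm]

lemma not_prefers_of_eq {M M' : α → Option β} {a : α} (h : M' a = M a) :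
    ¬ Prefers rank M M' a := by
  rintro (⟨b, h₁, h₂⟩ | ⟨b, b', h₁, h₂, h₃⟩) <;> simp_all

def matchedCost (cost : β → ℕ) (M : α → Option β) (a : α) : ℕ := (M a).elim 0 cost

lemma matchedCost_of_eq {cost : β → ℕ} {M : α → Option β} {a : α} {b : β} (h : M a = some b) :
    matchedCost cost M a = cost b := by
  simp [matchedCost, h]

variable [Fintype α]

lemma usage_pos_iff {M : α → Option β} {b : β} : 0 < usage M b ↔ ∃ a, M a = some b := by
  rw [usage, Finite.card_pos_iff, nonempty_subtype]

lemma usage_le_usage_of_injective {M M' : α → Option β} {σ : α → α} (hσ : Injective σ) {b : β}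
    (h : ∀ a, M' a = some b → M (σ a) = some b) : usage M' b ≤ usage M b :=
  Nat.card_le_card_of_injective (fun a => ⟨σ a.1, h a.1 a.2⟩)
    fun _ _ e => Subtype.ext (hσ (congrArg Subtype.val e))

lemma IsCapMatching.exists_edge {copies : β → ℕ} {M : α → Option β}
    (hM : IsCapMatching rank copies M) {a : α} (ha : (M a).isSome) :
    ∃ b, M a = some b ∧ Edge rank a b := by
  obtain ⟨b, hb⟩ := Option.isSome_iff_exists.mp ha
  exact ⟨b, hb, hM.1 a b hb⟩

lemma PopularCap.false_of_shift {copies : β → ℕ} {M : α → Option β}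
    (hM : PopularCap rank copies M) {a₁ a₂ x : α} {b₁ b₂ b₃ : β}
    (h₁₂ : a₁ ≠ a₂) (h₁x : a₁ ≠ x) (h₂x : a₂ ≠ x)
    (hM₁ : M a₁ = some b₁) (hM₂ : M a₂ = some b₂) (hMx : M x = some b₃)
    (hr₁ : rank a₁ b₂ < rank a₁ b₁) (hr₂ : rank a₂ b₃ < rank a₂ b₂) : False := by
  classical
  let σ : Equiv.Perm α := Equiv.swap a₁ a₂ * Equiv.swap a₂ x
  let M' : α → Option β := fun a => if a = x then none else M (σ a)
  have hM'₁ : M' a₁ = some b₂ := by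
    simp [M', σ, h₁x, Equiv.swap_apply_of_ne_of_ne h₁₂ h₁x, hM₂]
  have hM'₂ : M' a₂ = some b₃ := by
    simp [M', σ, h₂x, Equiv.swap_apply_of_ne_of_ne h₁x.symm h₂x.symm, hMx]
  have hM'_of_ne : ∀ a, a ≠ a₁ → a ≠ a₂ → a ≠ x → M' a = M a := by
    intro a ha₁ ha₂ hax
    simp [M', σ, hax, Equiv.swap_apply_of_ne_of_ne ha₂ hax, Equiv.swap_apply_of_ne_of_ne ha₁ ha₂]
  have hpref₁ : Prefers rank M' M a₁ := Or.inr ⟨b₂, b₁, hM'₁, hM₁, hr₁⟩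
  have hpref₂ : Prefers rank M' M a₂ := Or.inr ⟨b₃, b₂, hM'₂, hM₂, hr₂⟩
  have hcap : IsCapMatching rank copies M' := by
    refine ⟨fun a b hab => ?_, fun b => (usage_le_usage_of_injective σ.injective ?_).trans
      (hM.1.2 b)⟩
    · by_cases hax : a = x
      · simp [M', hax] at hab
      by_cases ha₁ : a = a₁
      · subst ha₁; rw [hM'₁, Option.some_inj] at hab; subst hab; exact hr₁.ne_top
      by_cases ha₂ : a = a₂
      · subst ha₂; rw [hM'₂, Option.some_inj] at hab; subst hab; exact hr₂.ne_top
      exact hM.1.1 a b (hM'_of_ne a ha₁ ha₂ hax ▸ hab)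
    · intro a ha
      simp only [M'] at ha
      split_ifs at ha
      exact ha
  have heq_x : ∀ a, Prefers rank M M' a → a = x := by
    intro a ha
    by_contra hax
    by_cases ha₁ : a = a₁
    · exact hpref₁.not_prefers (ha₁ ▸ ha)
    by_cases ha₂ : a = a₂
    · exact hpref₂.not_prefers (ha₂ ▸ ha)
    exact not_prefers_of_eq (hM'_of_ne a ha₁ ha₂ hax) ha
  have hle : Nat.card {a // Prefers rank M M' a} ≤ 1 :=
    Finite.card_le_one_iff_subsingleton.2
      ⟨fun a a' => Subtype.ext ((heq_x a a.2).trans (heq_x a' a'.2).symm)⟩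
  have hlt : 1 < Nat.card {a // Prefers rank M' M a} :=
    Finite.one_lt_card_iff_nontrivial.2 ⟨⟨a₁, hpref₁⟩, ⟨a₂, hpref₂⟩, by simpa using h₁₂⟩
  exact hM.2 M' hcap (hle.trans_lt hlt)

lemma sum_matchedCost [Fintype β] (cost : β → ℕ) (M : α → Option β) :
    ∑ a, matchedCost cost M a = ∑ b, usage M b * cost b := by
  classical
  simp_rw [usage, Nat.card_eq_fintype_card, Fintype.card_subtype, card_eq_sum_ones, sum_mul,
    one_mul, sum_filter]
  rw [sum_comm]
  refine sum_congr rfl fun a _ => ?_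
  cases h : M a <;> simp [matchedCost, h]

lemma IsCapMatching.sum_matchedCost_le [Fintype β] {copies : β → ℕ} {M : α → Option β}
    (hM : IsCapMatching rank copies M) (cost : β → ℕ) :
    ∑ a, matchedCost cost M a ≤ ∑ b, copies b * cost b := by
  rw [sum_matchedCost]
  exact sum_le_sum fun b _ => Nat.mul_le_mul_right _ (hM.2 b)

end Popularity

section Gadget

variable {m n : ℕ}

/-! The persons `a₁..a₃`, `a₄..a₆`, `a₇..a₉` of clause `i` are the rows `0, 1, 2` of
`Fin 9 ≃ Fin 3 × Fin 3`; the column `s` is the position of the literal `X_{j_{s+1}}`, and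
`pItem i s` is `p_{s+1}`. -/

def pairPerson (i : Fin m) (s : Fin 3) : Fin m × Fin 9 := (i, finProdFinEquiv (m := 3) (0, s))

def literalPerson (i : Fin m) (s : Fin 3) : Fin m × Fin 9 := (i, finProdFinEquiv (m := 3) (1, s))

def internalPerson (i : Fin m) (s : Fin 3) : Fin m × Fin 9 := (i, finProdFinEquiv (m := 3) (2, s))

def pItem (i : Fin m) (s : Fin 3) : InstItems m n := Sum.inr (i, s.castSucc)

def qItem (i : Fin m) : InstItems m n := Sum.inr (i, 3)

lemma sum_fin_nine_eq_sum_gadget (f : Fin m × Fin 9 → ℕ) (i : Fin m) :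
    ∑ k, f (i, k) =
      ∑ s, (f (pairPerson i s) + f (literalPerson i s) + f (internalPerson i s)) := by
  rw [← (finProdFinEquiv (m := 3) (n := 3)).sum_comp (fun k => f (i, k)), Fintype.sum_prod_type,
    Fin.sum_univ_three, ← sum_add_distrib, ← sum_add_distrib]
  rfl

@[simp]
lemma instCost_pItem (i : Fin m) (s : Fin 3) : instCost (pItem (n := n) i s) = 1 := by
  simp [instCost, pItem, Fin.val_castSucc, s.isLt.ne]

@[simp]
lemma instCost_qItem (i : Fin m) : instCost (qItem (n := n) i) = 0 := rfl

variable (cl : Fin m → Fin 3 → Fin n) (i : Fin m) (s : Fin 3) {b : InstItems m n}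

lemma eq_of_edge_pairPerson (h : Edge (instRank cl) (pairPerson i s) b) :
    b = Sum.inl (cl i s) ∨ b = Sum.inl (cl i (s + 1)) := by
  fin_cases s <;> rcases b with u | ⟨j, t⟩ <;>
    simp [Edge, instRank, pairPerson, finProdFinEquiv] at h ⊢ <;> grind

lemma eq_of_edge_literalPerson (h : Edge (instRank cl) (literalPerson i s) b) :
    b = Sum.inl (cl i s) ∨ b = pItem i s := by
  fin_cases s <;> rcases b with u | ⟨j, t⟩ <;>
    simp [Edge, instRank, literalPerson, pItem, finProdFinEquiv] at h ⊢ <;> grind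

lemma eq_of_edge_internalPerson (h : Edge (instRank cl) (internalPerson i s) b) :
    b = pItem i s ∨ b = qItem i := by
  fin_cases s <;> rcases b with u | ⟨j, t⟩ <;>
    simp [Edge, instRank, internalPerson, pItem, qItem, finProdFinEquiv] at h ⊢ <;> grind

lemma instRank_literalPerson_lt :
    instRank cl (literalPerson i s) (Sum.inl (cl i s)) <
      instRank cl (literalPerson i s) (pItem i s) := by
  fin_cases s <;> simp [instRank, literalPerson, pItem, finProdFinEquiv]

lemma instRank_internalPerson_lt :
    instRank cl (internalPerson i s) (pItem i s) < instRank cl (internalPerson i s) (qItem i) := by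
  fin_cases s <;> simp [instRank, internalPerson, pItem, qItem, finProdFinEquiv]

variable {cl i} {copies : InstItems m n → ℕ} {M : Fin m × Fin 9 → Option (InstItems m n)}

lemma PopularCap.usage_literal_eq_zero (hM : PopularCap (instRank cl) copies M)
    (hlit : M (literalPerson i s) = some (pItem i s))
    (hint : M (internalPerson i s) = some (qItem i)) :
    usage M (Sum.inl (cl i s)) = 0 := by
  by_contra hpos
  obtain ⟨x, hx⟩ := usage_pos_iff.1 (Nat.pos_of_ne_zero hpos)
  have hne : ∀ a, M a ≠ M x → a ≠ x := fun a h e => h (e ▸ rfl)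
  exact hM.false_of_shift (by simp [internalPerson, literalPerson])
    (hne _ (by simp [hint, hx, qItem])) (hne _ (by simp [hlit, hx, pItem])) hint hlit hx
    (instRank_internalPerson_lt cl i s) (instRank_literalPerson_lt cl i s)

lemma PopularCap.literalPerson_internalPerson_cost (hM : PopularCap (instRank cl) copies M)
    (hall : ∀ a, (M a).isSome) :
    3 ≤ matchedCost instCost M (literalPerson i s) + matchedCost instCost M (internalPerson i s) ∨
      matchedCost instCost M (literalPerson i s) = 1 ∧
        (matchedCost instCost M (internalPerson i s) = 1 ∨ usage M (Sum.inl (cl i s)) = 0) := by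
  obtain ⟨b, hb, hbe⟩ := hM.1.exists_edge (hall (literalPerson i s))
  obtain ⟨c, hc, hce⟩ := hM.1.exists_edge (hall (internalPerson i s))
  rcases eq_of_edge_literalPerson cl i s hbe with rfl | rfl <;>
    rcases eq_of_edge_internalPerson cl i s hce with rfl | rfl
  all_goals simp only [matchedCost_of_eq hb, matchedCost_of_eq hc]
  · left; simp [instCost]
  · left; simp [instCost]
  · right; simp
  · right; simp [hM.usage_literal_eq_zero s hb hc]

lemma IsCapMatching.pairPerson_cost (hM : IsCapMatching (instRank cl) copies M)
    (hall : ∀ a, (M a).isSome) :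
    matchedCost instCost M (pairPerson i s) = 3 ∧
      (0 < usage M (Sum.inl (cl i s)) ∨ 0 < usage M (Sum.inl (cl i (s + 1)))) := by
  obtain ⟨b, hb, hbe⟩ := hM.exists_edge (hall (pairPerson i s))
  rw [matchedCost_of_eq hb, usage_pos_iff, usage_pos_iff]
  rcases eq_of_edge_pairPerson cl i s hbe with rfl | rfl
  · exact ⟨rfl, .inl ⟨_, hb⟩⟩
  · exact ⟨rfl, .inr ⟨_, hb⟩⟩

lemma PopularCap.clause_cost (hM : PopularCap (instRank cl) copies M) (hall : ∀ a, (M a).isSome)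
    (i : Fin m) : 14 ≤ ∑ k, matchedCost instCost M (i, k) := by
  rw [sum_fin_nine_eq_sum_gadget, Fin.sum_univ_three]
  have h₀ := hM.1.pairPerson_cost (i := i) 0 hall
  have h₁ := hM.1.pairPerson_cost (i := i) 1 hall
  have h₂ := hM.1.pairPerson_cost (i := i) 2 hall
  have l₀ := hM.literalPerson_internalPerson_cost (i := i) 0 hall
  have l₁ := hM.literalPerson_internalPerson_cost (i := i) 1 hall
  have l₂ := hM.literalPerson_internalPerson_cost (i := i) 2 hall
  simp only [Fin.reduceAdd] at h₀ h₁ h₂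
  omega

end Gadget

theorem min_cost_popular_instance_lower_bound_general {m n : ℕ}
    (cl : Fin m → Fin 3 → Fin n)
    (copies : InstItems m n → ℕ)
    (hpop : ∃ M : Fin m × Fin 9 → Option (InstItems m n),
      PopularCap (instRank cl) copies M ∧ ∀ a, (M a).isSome) :
    14 * m ≤ instTotalCost copies := by
  obtain ⟨M, hM, hall⟩ := hpop
  calc 14 * m = ∑ _i : Fin m, 14 := by simp [mul_comm]
    _ ≤ ∑ i, ∑ k, matchedCost instCost M (i, k) := sum_le_sum fun i _ => hM.clause_cost hall i
    _ = ∑ a, matchedCost instCost M a := (Fintype.sum_prod_type _).symm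
    _ ≤ instTotalCost copies := hM.1.sum_matchedCost_le instCost

/-- Any choice of copies of the items for which the resulting instance admits a popular
matching that matches all people has total cost at least `14m`. -/
theorem min_cost_popular_instance_lower_bound {m n : ℕ}
    (cl : Fin m → Fin 3 → Fin n) (hdist : ∀ i, Function.Injective (cl i))
    (copies : InstItems m n → ℕ)
    (hpop : ∃ M : Fin m × Fin 9 → Option (InstItems m n),
      PopularCap (instRank cl) copies M ∧ ∀ a, (M a).isSome) :
    14 * m ≤ instTotalCost copies :=
  min_cost_popular_instance_lower_bound_general cl copies hpop
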